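/- For 7/4 ≤ a ≤ 19/4, let ρ₃(a) be the 6×6 matrix (1/(8a+2)) · [[3a+1,0,0,0,2a−1,0],[0,a,0,0,0,2a−1],[0,0,0,0,0,0],[0,0,0,0,0,0],[2a−1,0,0,0,a,0],[0,2a−1,0,0,0,3a+1]]. Then ρ₃(a) is a 2⊗3 state and it violates the inequality D ≥ N², i.e., D(ρ₃(a)) < N(ρ₃(a))². -/

import Mathlib

open Matrix BigOperators Polynomial
open scoped Kronecker ComplexOrder

noncomputable section

/-- Squared Hilbert–Schmidt norm `‖C‖² = Tr(CᴴC)`. -/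
def hsNormSq {d : Type*} [Fintype d] (C : Matrix d d ℂ) : ℝ :=
  (Matrix.trace (Cᴴ * C)).re

/-- Trace norm `‖X‖₁ = Tr √(XᴴX)`. -/
def traceNorm {d : Type*} [Fintype d] [DecidableEq d] (X : Matrix d d ℂ) : ℝ :=
  (((Matrix.posSemidef_conjTranspose_mul_self X).1.eigenvectorUnitary.1 *
      diagonal (((↑) : ℝ → ℂ) ∘ (√·) ∘ (Matrix.posSemidef_conjTranspose_mul_self X).1.eigenvalues) *
      (star (Matrix.posSemidef_conjTranspose_mul_self X).1.eigenvectorUnitary : Matrix d d ℂ)).trace).re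

/-- Partial transpose on the first factor: `ρ^Γ((i,k),(j,l)) = ρ((j,k),(i,l))`. -/
def ptranspose {m n : ℕ} (ρ : Matrix (Fin m × Fin n) (Fin m × Fin n) ℂ) :
    Matrix (Fin m × Fin n) (Fin m × Fin n) ℂ :=
  Matrix.of fun p q => ρ (q.1, p.2) (p.1, q.2)

/-- Negativity `N(ρ) = (‖ρ^Γ‖₁ - 1)/(m-1)`. -/
def negativity {m n : ℕ} (ρ : Matrix (Fin m × Fin n) (Fin m × Fin n) ℂ) : ℝ :=
  (traceNorm (ptranspose ρ) - 1) / ((m : ℝ) - 1)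

/-- `ψ` is an orthonormal basis of `ℂ^m` (an orthonormal family of `m` vectors). -/
def IsONB {m : ℕ} (ψ : Fin m → (Fin m → ℂ)) : Prop :=
  ∀ k l, (∑ i, star (ψ k i) * ψ l i) = if k = l then 1 else 0

/-- The rank-one projector `|v⟩⟨v|`. -/
def proj {m : ℕ} (v : Fin m → ℂ) : Matrix (Fin m) (Fin m) ℂ :=
  Matrix.vecMulVec v (fun j => star (v j))

/-- The von Neumann measurement map
`Π^A(ρ) = ∑ k, (|ψ_k⟩⟨ψ_k| ⊗ I_n) ρ (|ψ_k⟩⟨ψ_k| ⊗ I_n)`. -/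
def piA {m n : ℕ} (ψ : Fin m → (Fin m → ℂ))
    (ρ : Matrix (Fin m × Fin n) (Fin m × Fin n) ℂ) :
    Matrix (Fin m × Fin n) (Fin m × Fin n) ℂ :=
  ∑ k, (proj (ψ k) ⊗ₖ (1 : Matrix (Fin n) (Fin n) ℂ)) * ρ *
       (proj (ψ k) ⊗ₖ (1 : Matrix (Fin n) (Fin n) ℂ))

/-- Geometric discord
`D(ρ) = (m/(m-1)) · inf over von Neumann measurements of ‖ρ - Π^A(ρ)‖²`. -/
def gd {m n : ℕ} (ρ : Matrix (Fin m × Fin n) (Fin m × Fin n) ℂ) : ℝ :=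
  ((m : ℝ) / ((m : ℝ) - 1)) *
    ⨅ ψ : {ψ : Fin m → (Fin m → ℂ) // IsONB ψ}, hsNormSq (ρ - piA ψ.1 ρ)

/-- An `m ⊗ n` state: positive semidefinite with trace one. -/
def IsState {m n : ℕ} (ρ : Matrix (Fin m × Fin n) (Fin m × Fin n) ℂ) : Prop :=
  ρ.PosSemidef ∧ ρ.trace = 1

/-- Reindex a `6 × 6` matrix by `Fin 2 × Fin 3` with the ordering
`(1,1),(1,2),(1,3),(2,1),(2,2),(2,3)`. -/
def ofM6 (M : Matrix (Fin 6) (Fin 6) ℂ) :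
    Matrix (Fin 2 × Fin 3) (Fin 2 × Fin 3) ℂ :=
  Matrix.of fun p q =>
    M ⟨p.1.val * 3 + p.2.val, by have := p.1.isLt; have := p.2.isLt; omega⟩
      ⟨q.1.val * 3 + q.2.val, by have := q.1.isLt; have := q.2.isLt; omega⟩

/-- The family of states `ρ₁(a,b)`. -/
def rho1 (a b : ℝ) : Matrix (Fin 2 × Fin 3) (Fin 2 × Fin 3) ℂ :=
  ofM6 ((1 / (2 * ((a : ℂ)^2 + (b : ℂ)^2))) •
    !![(a:ℂ)^2, 0, 0, 0, (a:ℂ)*(b:ℂ), 0;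
       0, (b:ℂ)^2, 0, 0, 0, (a:ℂ)*(b:ℂ);
       0, 0, 0, 0, 0, 0;
       0, 0, 0, 0, 0, 0;
       (a:ℂ)*(b:ℂ), 0, 0, 0, (b:ℂ)^2, 0;
       0, (a:ℂ)*(b:ℂ), 0, 0, 0, (a:ℂ)^2])

/-
With P = (3a+1)/(8a+2), Q = (2a-1)/(8a+2) and R = a/(8a+2), a permutation of the product basis
turns ρ₃(a) into the direct sum of [[P,Q],[Q,R]], [[R,Q],[Q,P]] and 0, so ρ₃(a) is a state as soon
as Q² ≤ PR, which is where a ≤ 19/4 enters. Another permutation turns its partial transpose into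
the direct sum of P·1, [[R,Q],[Q,0]] and [[0,Q],[Q,R]]; each indefinite block has trace norm
√(R²+4Q²), so N = 2P + 2√(R²+4Q²) − 1 = 2√(R²+4Q²) − 2R. Measuring in the computational basis
removes exactly the four entries Q, so D ≤ 2·4Q². Finally 8Q² < N² reduces to
R√(R²+4Q²) < R² + Q², i.e. to 2R² < Q², which holds for a ≥ 7/4.
-/

lemma eq_submatrix_symm_of_submatrix_eq {d e R : Type*} {A : Matrix d d R} {B : Matrix e e R}
    {σ : e ≃ d} (h : A.submatrix σ σ = B) : A = B.submatrix σ.symm σ.symm := by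
  rw [← h]; simp

section
variable {m o d e : Type*} [Fintype m] [Fintype o] [Fintype d] [Fintype e] [DecidableEq o]

lemma trace_submatrix_equiv {R : Type*} [AddCommMonoid R] (A : Matrix d d R) (σ : e ≃ d) :
    (A.submatrix σ σ).trace = A.trace :=
  σ.sum_comp fun i => A i i

lemma hsNormSq_nonneg (C : Matrix d d ℂ) : 0 ≤ hsNormSq C :=
  Complex.nonneg_iff.mp (posSemidef_conjTranspose_mul_self C).trace_nonneg |>.1

lemma hsNormSq_submatrix_equiv (C : Matrix d d ℂ) (σ : e ≃ d) :
    hsNormSq (C.submatrix σ σ) = hsNormSq C := by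
  rw [hsNormSq, conjTranspose_submatrix, submatrix_mul_equiv, trace_submatrix_equiv, hsNormSq]

lemma hsNormSq_blockDiagonal (M : o → Matrix m m ℂ) :
    hsNormSq (blockDiagonal M) = ∑ k, hsNormSq (M k) := by
  rw [hsNormSq, blockDiagonal_conjTranspose, ← blockDiagonal_mul, trace_blockDiagonal,
    Complex.re_sum]
  rfl

lemma posSemidef_blockDiagonal [DecidableEq m] {M : o → Matrix m m ℂ}
    (hM : ∀ k, (M k).PosSemidef) : (blockDiagonal M).PosSemidef := by
  refine .of_dotProduct_mulVec_nonneg (isHermitian_blockDiagonal_iff.2 fun k => (hM k).1)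
    fun x => ?_
  have : star x ⬝ᵥ blockDiagonal M *ᵥ x =
      ∑ k, star (fun i => x (i, k)) ⬝ᵥ M k *ᵥ (fun i => x (i, k)) := by
    simp only [dotProduct, Pi.star_apply, RCLike.star_def, mulVec, blockDiagonal_apply, ite_mul,
      zero_mul, Fintype.sum_prod_type, Finset.sum_ite_eq, Finset.mem_univ, ↓reduceIte,
      Finset.mul_sum]
    exact Finset.sum_comm
  rw [this]
  exact Finset.sum_nonneg fun k _ => (hM k).dotProduct_mulVec_nonneg _

end

lemma quadratic_form_nonneg_of_sq_le_mul {p q r : ℝ} (hp : 0 ≤ p) (hr : 0 ≤ r)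
    (hq : q ^ 2 ≤ p * r) (u v : ℝ) :
    0 ≤ p * u ^ 2 + 2 * q * u * v + r * v ^ 2 := by
  rcases hp.eq_or_lt with rfl | hp
  · obtain rfl : q = 0 := by nlinarith
    nlinarith [mul_nonneg hr (sq_nonneg v)]
  · have : 0 ≤ p * (p * u ^ 2 + 2 * q * u * v + r * v ^ 2) := by
      nlinarith [sq_nonneg (p * u + q * v), mul_nonneg (sub_nonneg.2 hq) (sq_nonneg v)]
    exact nonneg_of_mul_nonneg_right (by linarith) hp

lemma isHermitian_ofReal_fin_two (x y z : ℝ) : (!![(x : ℂ), y; y, z]).IsHermitian := by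
  ext i j; fin_cases i <;> fin_cases j <;> simp

lemma posSemidef_of_real_fin_two {p q r : ℝ} (hp : 0 ≤ p) (hr : 0 ≤ r) (hq : q ^ 2 ≤ p * r) :
    (!![(p : ℂ), q; q, r]).PosSemidef := by
  refine .of_dotProduct_mulVec_nonneg (isHermitian_ofReal_fin_two p q r) fun x => ?_
  simp only [dotProduct, mulVec, Fin.sum_univ_two, Pi.star_apply, of_apply, cons_val',
    cons_val_zero, cons_val_one, empty_val', cons_val_fin_one]
  rw [Complex.le_def]
  simp only [Complex.zero_re, RCLike.star_def, Complex.add_re, Complex.mul_re, Complex.conj_re,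
    Complex.ofReal_re, Complex.ofReal_im, zero_mul, sub_zero, Complex.conj_im, Complex.add_im,
    Complex.mul_im, add_zero, neg_mul, sub_neg_eq_add, Complex.zero_im]
  constructor
  · linarith [quadratic_form_nonneg_of_sq_le_mul hp hr hq (x 0).re (x 1).re,
      quadratic_form_nonneg_of_sq_le_mul hp hr hq (x 0).im (x 1).im]
  · ring

lemma exists_posSemidef_mul_self_eq_fin_two {x y z : ℝ} (h : x * z ≤ y ^ 2) :
    ∃ A : Matrix (Fin 2) (Fin 2) ℂ, A.PosSemidef ∧
      A * A = (!![(x : ℂ), y; y, z])ᴴ * !![(x : ℂ), y; y, z] ∧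
      A.trace = √((x - z) ^ 2 + 4 * y ^ 2) := by
  rw [(isHermitian_ofReal_fin_two x y z).eq]
  rcases (Real.sqrt_nonneg ((x - z) ^ 2 + 4 * y ^ 2)).eq_or_lt with ht0 | ht0
  · have hsq := Real.sqrt_eq_zero'.mp ht0.symm
    obtain rfl : y = 0 := by nlinarith [sq_nonneg (x - z)]
    obtain rfl : x = z := by nlinarith
    obtain rfl : x = 0 := by nlinarith
    refine ⟨0, .zero, ?_, by simp⟩
    ext i j; fin_cases i <;> fin_cases j <;> simp
  set t := √((x - z) ^ 2 + 4 * y ^ 2)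
  have ht2 : t ^ 2 = (x - z) ^ 2 + 4 * y ^ 2 := Real.sq_sqrt (by positivity)
  have htC : (t : ℂ) ^ 2 = (x - z) ^ 2 + 4 * y ^ 2 := by exact_mod_cast ht2
  have htC0 : (t : ℂ) ≠ 0 := by exact_mod_cast ht0.ne'
  -- |B| = (B² - det B • 1) / t for B = !![x, y; y, z], by Cayley–Hamilton since det B ≤ 0
  refine ⟨!![(((x ^ 2 + 2 * y ^ 2 - x * z) / t : ℝ) : ℂ), ((y * (x + z) / t : ℝ) : ℂ);
      ((y * (x + z) / t : ℝ) : ℂ), (((z ^ 2 + 2 * y ^ 2 - x * z) / t : ℝ) : ℂ)], ?_, ?_, ?_⟩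
  · refine posSemidef_of_real_fin_two (div_nonneg (by nlinarith) ht0.le)
      (div_nonneg (by nlinarith) ht0.le) ?_
    rw [div_pow, div_mul_div_comm, ← sq, div_le_div_iff_of_pos_right (by positivity)]
    nlinarith [mul_nonneg (sub_nonneg.2 h) (sq_nonneg t)]
  · ext i j
    fin_cases i <;> fin_cases j <;> simp [mul_apply, Fin.sum_univ_two]
    all_goals field_simp; rw [htC]; ring
  · rw [trace_fin_two_of]
    norm_cast
    field_simp
    linear_combination -ht2

open scoped MatrixOrder in
lemma traceNorm_eq_re_trace_of_mul_self_eq {d : Type*} [Fintype d] [DecidableEq d]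
    {X S : Matrix d d ℂ} (hS : S.PosSemidef) (h : S * S = Xᴴ * X) : traceNorm X = S.trace.re := by
  have hX := posSemidef_conjTranspose_mul_self X
  have hsqrt : CFC.sqrt (Xᴴ * X) = S := CFC.sqrt_unique h hS.nonneg
  have h2 := CFC.sqrt_eq_real_sqrt (Xᴴ * X) hX.nonneg
  rw [cfcₙ_eq_cfc, hX.1.cfc_eq, hsqrt] at h2
  rw [traceNorm, h2]
  rfl

lemma isONB_one (m : ℕ) : IsONB (1 : Matrix (Fin m) (Fin m) ℂ) := by
  intro k l
  simp [one_apply]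

lemma proj_one_kronecker_one {m n : ℕ} (k : Fin m) :
    proj ((1 : Matrix (Fin m) (Fin m) ℂ) k) ⊗ₖ (1 : Matrix (Fin n) (Fin n) ℂ) =
      diagonal fun p => if p.1 = k then 1 else 0 := by
  ext ⟨i, a⟩ ⟨j, b⟩
  simp only [proj, one_apply, RCLike.star_def, MonoidWithZeroHom.map_ite_one_zero,
    kroneckerMap_apply, vecMulVec_apply, mul_ite, mul_one, mul_zero, diagonal_apply, Prod.mk.injEq]
  grind

lemma piA_one {m n : ℕ} (ρ : Matrix (Fin m × Fin n) (Fin m × Fin n) ℂ) :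
    piA (1 : Matrix (Fin m) (Fin m) ℂ) ρ = of fun p q => if p.1 = q.1 then ρ p q else 0 := by
  ext p q
  simp [piA, proj_one_kronecker_one, diagonal_mul, mul_diagonal, Matrix.sum_apply]

lemma gd_le_hsNormSq_sub_piA {m n : ℕ} (ρ : Matrix (Fin m × Fin n) (Fin m × Fin n) ℂ)
    {ψ : Fin m → Fin m → ℂ} (hψ : IsONB ψ) :
    gd ρ ≤ (m : ℝ) / ((m : ℝ) - 1) * hsNormSq (ρ - piA ψ ρ) := by
  have hbdd : BddBelow (Set.range fun ψ : {ψ : Fin m → Fin m → ℂ // IsONB ψ} =>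
      hsNormSq (ρ - piA ψ.1 ρ)) :=
    ⟨0, by rintro _ ⟨ψ, rfl⟩; exact hsNormSq_nonneg _⟩
  have hm : 0 ≤ (m : ℝ) / ((m : ℝ) - 1) := by
    rcases m with _ | m
    · simp
    · push_cast; simp only [add_sub_cancel_right]; positivity
  exact mul_le_mul_of_nonneg_left (ciInf_le hbdd ⟨ψ, hψ⟩) hm

-- The blocks of ρ₃(a) sit on the index pairs {(0, k), (1, k + 1)}, those of its partial transpose
-- on {(0, k), (1, k - 1)}.
def rhoIndex : Fin 2 × Fin 3 ≃ Fin 2 × Fin 3 :=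
  (Equiv.refl _).prodShear fun a => Equiv.addRight (Fin.castSucc a)

def ptIndex : Fin 2 × Fin 3 ≃ Fin 2 × Fin 3 :=
  (Equiv.refl _).prodShear fun a => Equiv.subRight (Fin.castSucc a)

def rhoBlocks (P Q R : ℝ) : Fin 3 → Matrix (Fin 2) (Fin 2) ℂ
  | 0 => !![(P : ℂ), Q; Q, R]
  | 1 => !![(R : ℂ), Q; Q, P]
  | 2 => 0

def ptBlocks (P Q R : ℝ) : Fin 3 → Matrix (Fin 2) (Fin 2) ℂ
  | 0 => (P : ℂ) • 1
  | 1 => !![(R : ℂ), Q; Q, 0]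
  | 2 => !![0, (Q : ℂ); Q, R]

def rho3 (a : ℝ) : Matrix (Fin 2 × Fin 3) (Fin 2 × Fin 3) ℂ :=
  ofM6 ((1 / (8 * (a : ℂ) + 2)) •
      !![3*(a:ℂ)+1, 0, 0, 0, 2*(a:ℂ)-1, 0;
         0, (a:ℂ), 0, 0, 0, 2*(a:ℂ)-1;
         0, 0, 0, 0, 0, 0;
         0, 0, 0, 0, 0, 0;
         2*(a:ℂ)-1, 0, 0, 0, (a:ℂ), 0;
         0, 2*(a:ℂ)-1, 0, 0, 0, 3*(a:ℂ)+1])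

lemma rho3_submatrix_rhoIndex {a : ℝ} (ha : 8 * a + 2 ≠ 0) :
    (rho3 a).submatrix rhoIndex rhoIndex =
      blockDiagonal (rhoBlocks ((3 * a + 1) / (8 * a + 2)) ((2 * a - 1) / (8 * a + 2))
        (a / (8 * a + 2))) := by
  have ha' : 8 * (a : ℂ) + 2 ≠ 0 := by exact_mod_cast ha
  ext ⟨i, k⟩ ⟨j, l⟩
  fin_cases i <;> fin_cases k <;> fin_cases j <;> fin_cases l <;>
    simp [rho3, ofM6, rhoIndex, rhoBlocks, blockDiagonal_apply] <;> field_simp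

section
variable {ρ : Matrix (Fin 2 × Fin 3) (Fin 2 × Fin 3) ℂ} {P Q R : ℝ}
  (hρ : ρ.submatrix rhoIndex rhoIndex = blockDiagonal (rhoBlocks P Q R))
include hρ

lemma ptranspose_submatrix_ptIndex :
    (ptranspose ρ).submatrix ptIndex ptIndex = blockDiagonal (ptBlocks P Q R) := by
  rw [eq_submatrix_symm_of_submatrix_eq hρ]
  ext ⟨i, k⟩ ⟨j, l⟩
  fin_cases i <;> fin_cases k <;> fin_cases j <;> fin_cases l <;>
    simp [Fin.neg_def, ptranspose, rhoIndex, ptIndex, rhoBlocks, ptBlocks, blockDiagonal_apply]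

lemma sub_piA_one_submatrix_rhoIndex :
    (ρ - piA (1 : Matrix (Fin 2) (Fin 2) ℂ) ρ).submatrix rhoIndex rhoIndex =
      blockDiagonal fun k => if k = 2 then 0 else !![0, (Q : ℂ); Q, 0] := by
  rw [piA_one, eq_submatrix_symm_of_submatrix_eq hρ]
  ext ⟨i, k⟩ ⟨j, l⟩
  fin_cases i <;> fin_cases k <;> fin_cases j <;> fin_cases l <;>
    simp [Fin.neg_def, rhoIndex, rhoBlocks, blockDiagonal_apply]

lemma isState_of_submatrix_rhoIndex (hP : 0 ≤ P) (hR : 0 ≤ R) (hQ : Q ^ 2 ≤ P * R)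
    (hPR : P + R = 1 / 2) : IsState ρ := by
  rw [eq_submatrix_symm_of_submatrix_eq hρ]
  refine ⟨(posSemidef_blockDiagonal fun k => ?_).submatrix _, ?_⟩
  · fin_cases k
    · exact posSemidef_of_real_fin_two hP hR hQ
    · exact posSemidef_of_real_fin_two hR hP (by linarith)
    · exact .zero
  · rw [trace_submatrix_equiv, trace_blockDiagonal]
    have hPR' : (P : ℂ) + R = 1 / 2 := by rw [← Complex.ofReal_add, hPR]; norm_num
    simp only [rhoBlocks, Fin.sum_univ_three, trace_fin_two_of, trace_zero, add_zero]
    linear_combination 2 * hPR'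

lemma traceNorm_ptranspose_of_submatrix_rhoIndex (hP : 0 ≤ P) :
    traceNorm (ptranspose ρ) = 2 * P + 2 * √(R ^ 2 + 4 * Q ^ 2) := by
  obtain ⟨A₁, hA₁, hA₁_sq, hA₁_tr⟩ :=
    exists_posSemidef_mul_self_eq_fin_two (x := R) (y := Q) (z := 0) (by simp; positivity)
  obtain ⟨A₂, hA₂, hA₂_sq, hA₂_tr⟩ :=
    exists_posSemidef_mul_self_eq_fin_two (x := 0) (y := Q) (z := R) (by simp; positivity)
  let S : Fin 3 → Matrix (Fin 2) (Fin 2) ℂ := ![(P : ℂ) • 1, A₁, A₂]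
  rw [eq_submatrix_symm_of_submatrix_eq (ptranspose_submatrix_ptIndex hρ),
    traceNorm_eq_re_trace_of_mul_self_eq
      (S := (blockDiagonal S).submatrix ptIndex.symm ptIndex.symm)]
  · rw [trace_submatrix_equiv, trace_blockDiagonal]
    simp only [S, Complex.coe_smul, Fin.sum_univ_three, cons_val_zero, trace_smul, trace_one,
      Fintype.card_fin, Nat.cast_ofNat, Complex.real_smul, cons_val_one, hA₁_tr, sub_zero, cons_val,
      hA₂_tr, zero_sub, even_two, Even.neg_pow, Complex.add_re, Complex.mul_re, Complex.ofReal_re,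
      Complex.re_ofNat, Complex.ofReal_im, Complex.im_ofNat, mul_zero]
    ring
  · refine (posSemidef_blockDiagonal fun k => ?_).submatrix _
    fin_cases k
    · exact PosSemidef.one.smul (by exact_mod_cast hP)
    · exact hA₁
    · exact hA₂
  · rw [conjTranspose_submatrix, submatrix_mul_equiv, submatrix_mul_equiv,
      blockDiagonal_conjTranspose, ← blockDiagonal_mul, ← blockDiagonal_mul]
    congr 2
    funext k
    fin_cases k
    · simp [S, ptBlocks]
    · exact hA₁_sq
    · exact hA₂_sq

lemma hsNormSq_sub_piA_one_of_submatrix_rhoIndex :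
    hsNormSq (ρ - piA (1 : Matrix (Fin 2) (Fin 2) ℂ) ρ) = 4 * Q ^ 2 := by
  rw [← hsNormSq_submatrix_equiv _ rhoIndex, sub_piA_one_submatrix_rhoIndex hρ,
    hsNormSq_blockDiagonal]
  simp only [hsNormSq, mul_ite, mul_zero, trace_fin_two, Complex.add_re, Fin.sum_univ_three,
    Fin.reduceEq, ↓reduceIte, mul_apply, conjTranspose_apply, of_apply, cons_val', cons_val_zero,
    cons_val_fin_one, RCLike.star_def, Fin.sum_univ_two, map_zero, cons_val_one,
    Complex.conj_ofReal, zero_add, Complex.mul_re, Complex.ofReal_re, Complex.ofReal_im, sub_zero,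
    add_zero, Matrix.zero_apply, Complex.zero_re]
  ring

lemma gd_le_of_submatrix_rhoIndex : gd ρ ≤ 8 * Q ^ 2 := by
  refine (gd_le_hsNormSq_sub_piA ρ (isONB_one 2)).trans_eq ?_
  rw [hsNormSq_sub_piA_one_of_submatrix_rhoIndex hρ]
  norm_num
  ring

lemma negativity_of_submatrix_rhoIndex (hP : 0 ≤ P) (hPR : P + R = 1 / 2) :
    negativity ρ = 2 * √(R ^ 2 + 4 * Q ^ 2) - 2 * R := by
  rw [negativity, traceNorm_ptranspose_of_submatrix_rhoIndex hρ hP]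
  norm_num
  linarith

end

lemma eight_mul_sq_lt_sq_sqrt_sub {Q R : ℝ} (hRQ : 2 * R ^ 2 < Q ^ 2) :
    8 * Q ^ 2 < (2 * √(R ^ 2 + 4 * Q ^ 2) - 2 * R) ^ 2 := by
  set s := √(R ^ 2 + 4 * Q ^ 2)
  have hs : s ^ 2 = R ^ 2 + 4 * Q ^ 2 := Real.sq_sqrt (by positivity)
  have hRs : R * s < R ^ 2 + Q ^ 2 := by
    refine lt_of_pow_lt_pow_left₀ 2 (by positivity) ?_
    rw [mul_pow, hs]
    nlinarith [mul_lt_mul_of_pos_left hRQ (by nlinarith : (0 : ℝ) < Q ^ 2)]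
  nlinarith

theorem stmt15 (a : ℝ) (ha0 : 7/4 ≤ a) (ha1 : a ≤ 19/4)
    (ρ : Matrix (Fin 2 × Fin 3) (Fin 2 × Fin 3) ℂ)
    (hρ : ρ = ofM6 ((1 / (8 * (a : ℂ) + 2)) •
      !![3*(a:ℂ)+1, 0, 0, 0, 2*(a:ℂ)-1, 0;
         0, (a:ℂ), 0, 0, 0, 2*(a:ℂ)-1;
         0, 0, 0, 0, 0, 0;
         0, 0, 0, 0, 0, 0;
         2*(a:ℂ)-1, 0, 0, 0, (a:ℂ), 0;
         0, 2*(a:ℂ)-1, 0, 0, 0, 3*(a:ℂ)+1])) :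
    IsState ρ ∧ gd ρ < negativity ρ ^ 2 := by
  have hd : 0 < 8 * a + 2 := by linarith
  have hblocks := rho3_submatrix_rhoIndex hd.ne'
  rw [rho3, ← hρ] at hblocks
  set P := (3 * a + 1) / (8 * a + 2)
  set Q := (2 * a - 1) / (8 * a + 2)
  set R := a / (8 * a + 2)
  have hP : 0 ≤ P := div_nonneg (by linarith) hd.le
  have hR : 0 ≤ R := div_nonneg (by linarith) hd.le
  have hPR : P + R = 1 / 2 := by rw [← add_div, div_eq_iff hd.ne']; ring
  have hQ : Q ^ 2 ≤ P * R := by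
    rw [div_pow, div_mul_div_comm, ← sq, div_le_div_iff_of_pos_right (by positivity)]
    nlinarith [mul_nonneg (sub_nonneg.2 ha0) (sub_nonneg.2 ha1)]
  have hRQ : 2 * R ^ 2 < Q ^ 2 := by
    rw [div_pow, div_pow, ← mul_div_assoc, div_lt_div_iff_of_pos_right (by positivity)]
    nlinarith
  refine ⟨isState_of_submatrix_rhoIndex hblocks hP hR hQ hPR, ?_⟩
  calc gd ρ ≤ 8 * Q ^ 2 := gd_le_of_submatrix_rhoIndex hblocks
    _ < (2 * √(R ^ 2 + 4 * Q ^ 2) - 2 * R) ^ 2 := eight_mul_sq_lt_sq_sqrt_sub hRQ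
    _ = negativity ρ ^ 2 := by rw [negativity_of_submatrix_rhoIndex hblocks hP hPR]

end
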